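/- arXiv:2504.04361 — 3 statements merged into one kernel-verified Lean document; each statement's English description precedes it below -/
import Mathlib

section
/- Let b₁ < d₁ ≤ b₂ < d₂ be real numbers and p ≥ 1. Then ((d₁−b₁)/2)^p + ((d₂−b₂)/2)^p ≤ (max(b₂−b₁, d₂−d₁))^p. -/
lemma half_sub_add_half_sub_le_max_sub {b₁ d₁ b₂ d₂ : ℝ} (h : d₁ ≤ b₂) :
    (d₁ - b₁) / 2 + (d₂ - b₂) / 2 ≤ max (b₂ - b₁) (d₂ - d₁) := by
  have := le_max_left (b₂ - b₁) (d₂ - d₁)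
  have := le_max_right (b₂ - b₁) (d₂ - d₁)
  linarith

theorem sum_pow_half_lifespans_le
    (b₁ d₁ b₂ d₂ : ℝ) (h₁ : b₁ < d₁) (h₂ : d₁ ≤ b₂) (h₃ : b₂ < d₂)
    (p : ℝ) (hp : 1 ≤ p) :
    ((d₁ - b₁) / 2) ^ p + ((d₂ - b₂) / 2) ^ p ≤ (max (b₂ - b₁) (d₂ - d₁)) ^ p :=
  calc ((d₁ - b₁) / 2) ^ p + ((d₂ - b₂) / 2) ^ p
      ≤ ((d₁ - b₁) / 2 + (d₂ - b₂) / 2) ^ p :=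
        Real.add_rpow_le_rpow_add (by linarith) (by linarith) hp
    _ ≤ (max (b₂ - b₁) (d₂ - d₁)) ^ p :=
        Real.rpow_le_rpow (by linarith) (half_sub_add_half_sub_le_max_sub h₂) (by linarith)
end

section
/- If persistence diagrams D₁ and D₂ are orthogonal (for every (b₁,d₁) ∈ D₁ and (b₂,d₂) ∈ D₂ the open intervals (b₁,d₁) and (b₂,d₂) are disjoint), then the trivial matching—pairing each point of either diagram with its closest point on the diagonal—achieves the infimum defining the bottleneck distance W_∞(D₁, D₂). -/
open MeasureTheory Filter

noncomputable section

/-- `D` is a persistence diagram: every feature is born before it dies. -/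
def IsDiagram (D : Multiset (ℝ × ℝ)) : Prop := ∀ p ∈ D, p.1 < p.2

/-- Supremum norm distance on ℝ². -/
def distSup (x y : ℝ × ℝ) : ℝ := max |x.1 - y.1| |x.2 - y.2|

/-- `M` is a matching between `D₁` and `D₂`: a bijective pairing between the
diagrams augmented with finitely many diagonal points. -/
def IsMatching (D₁ D₂ : Multiset (ℝ × ℝ)) (M : Multiset ((ℝ × ℝ) × (ℝ × ℝ))) : Prop :=
  ∃ E₁ E₂ : Multiset (ℝ × ℝ), (∀ x ∈ E₁, x.1 = x.2) ∧ (∀ y ∈ E₂, y.1 = y.2) ∧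
    M.map Prod.fst = D₁ + E₁ ∧ M.map Prod.snd = D₂ + E₂

/-- The bottleneck cost of a matching: the largest sup-norm distance within a pair. -/
def costSup (M : Multiset ((ℝ × ℝ) × (ℝ × ℝ))) : ℝ :=
  sSup (insert 0 {c | ∃ pr ∈ M, c = distSup pr.1 pr.2})

/-- Bottleneck distance between persistence diagrams. -/
def bottleneck (D₁ D₂ : Multiset (ℝ × ℝ)) : ℝ :=
  sInf {c | ∃ M, IsMatching D₁ D₂ M ∧ c = costSup M}

/-- `p`-Wasserstein distance between persistence diagrams. -/
def wasserstein (p : ℝ) (D₁ D₂ : Multiset (ℝ × ℝ)) : ℝ :=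
  sInf {c | ∃ M, IsMatching D₁ D₂ M ∧
    c = ((M.map fun pr => distSup pr.1 pr.2 ^ p).sum) ^ (1 / p)}

/-- The trivial matching: each point of either diagram is paired with its closest
diagonal point. -/
def trivMatch (D₁ D₂ : Multiset (ℝ × ℝ)) : Multiset ((ℝ × ℝ) × (ℝ × ℝ)) :=
  (D₁.map fun x => (x, ((x.1 + x.2) / 2, (x.1 + x.2) / 2))) +
  (D₂.map fun y => (((y.1 + y.2) / 2, (y.1 + y.2) / 2), y))

/-!
The trivial matching pays exactly half the persistence, `(d - b) / 2`, for each point `(b, d)`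
of either diagram. Every matching pays at least that much at each such point `p`: the partner
`q` of `p` is either diagonal or, by orthogonality, has an open interval disjoint from that of
`p`, and if `‖p - q‖_∞ < (d - b) / 2` the midpoint `(b + d) / 2` would lie in both intervals.
-/

open Set

def diagProj (x : ℝ × ℝ) : ℝ × ℝ := ((x.1 + x.2) / 2, (x.1 + x.2) / 2)

lemma trivMatch_eq (D₁ D₂ : Multiset (ℝ × ℝ)) :
    trivMatch D₁ D₂ =
      D₁.map (fun x => (x, diagProj x)) + D₂.map (fun y => (diagProj y, y)) :=
  rfl

lemma distSup_comm (x y : ℝ × ℝ) : distSup x y = distSup y x := by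
  unfold distSup
  rw [abs_sub_comm x.1, abs_sub_comm x.2]

lemma distSup_diagProj {x : ℝ × ℝ} (h : x.1 ≤ x.2) :
    distSup x (diagProj x) = (x.2 - x.1) / 2 := by
  have h₁ : x.1 - (x.1 + x.2) / 2 = -((x.2 - x.1) / 2) := by ring
  have h₂ : x.2 - (x.1 + x.2) / 2 = (x.2 - x.1) / 2 := by ring
  simp only [distSup, diagProj, h₁, h₂, abs_neg, max_self]
  exact abs_of_nonneg (by linarith)

lemma half_sub_le_distSup_of_disjoint {p q : ℝ × ℝ}
    (h : Disjoint (Ioo p.1 p.2) (Ioo q.1 q.2)) : (p.2 - p.1) / 2 ≤ distSup p q := by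
  by_contra! hlt
  have h₁ := abs_lt.1 ((le_max_left _ _).trans_lt hlt)
  have h₂ := abs_lt.1 ((le_max_right _ _).trans_lt hlt)
  have hmid : (p.1 + p.2) / 2 ∈ Ioo p.1 p.2 := ⟨by linarith, by linarith⟩
  exact Set.disjoint_left.1 h hmid ⟨by linarith, by linarith⟩

section costSup

variable {M : Multiset ((ℝ × ℝ) × (ℝ × ℝ))}

lemma bddAbove_costSet (M : Multiset ((ℝ × ℝ) × (ℝ × ℝ))) :
    BddAbove (insert (0 : ℝ) {c | ∃ pr ∈ M, c = distSup pr.1 pr.2}) := by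
  refine (Finite.insert 0 ?_).bddAbove
  refine (M.toFinset.finite_toSet.image fun pr => distSup pr.1 pr.2).subset ?_
  rintro c ⟨pr, hpr, rfl⟩
  exact ⟨pr, Multiset.mem_toFinset.2 hpr, rfl⟩

lemma le_costSup {pr : (ℝ × ℝ) × (ℝ × ℝ)} (h : pr ∈ M) : distSup pr.1 pr.2 ≤ costSup M :=
  le_csSup (bddAbove_costSet M) (mem_insert_of_mem 0 ⟨pr, h, rfl⟩)

lemma costSup_nonneg (M : Multiset ((ℝ × ℝ) × (ℝ × ℝ))) : 0 ≤ costSup M :=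
  le_csSup (bddAbove_costSet M) (mem_insert 0 _)

lemma costSup_le {c : ℝ} (hc : 0 ≤ c) (h : ∀ pr ∈ M, distSup pr.1 pr.2 ≤ c) :
    costSup M ≤ c := by
  refine csSup_le (insert_nonempty _ _) ?_
  rintro _ (rfl | ⟨pr, hpr, rfl⟩)
  exacts [hc, h pr hpr]

lemma costSup_map_swap (M : Multiset ((ℝ × ℝ) × (ℝ × ℝ))) :
    costSup (M.map Prod.swap) = costSup M := by
  refine le_antisymm (costSup_le (costSup_nonneg M) ?_) (costSup_le (costSup_nonneg _) ?_)
  · simp only [Multiset.mem_map]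
    rintro _ ⟨pr, hpr, rfl⟩
    exact (distSup_comm _ _).trans_le (le_costSup hpr)
  · intro pr hpr
    exact (distSup_comm _ _).trans_le (le_costSup (Multiset.mem_map_of_mem Prod.swap hpr))

end costSup

section IsMatching

variable {D₁ D₂ : Multiset (ℝ × ℝ)} {M : Multiset ((ℝ × ℝ) × (ℝ × ℝ))}

lemma IsMatching.map_swap (hM : IsMatching D₁ D₂ M) : IsMatching D₂ D₁ (M.map Prod.swap) := by
  obtain ⟨E₁, E₂, hE₁, hE₂, hM₁, hM₂⟩ := hM
  refine ⟨E₂, E₁, hE₂, hE₁, ?_, ?_⟩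
  · rw [Multiset.map_map]
    exact hM₂
  · rw [Multiset.map_map]
    exact hM₁

lemma trivMatch_isMatching (D₁ D₂ : Multiset (ℝ × ℝ)) :
    IsMatching D₁ D₂ (trivMatch D₁ D₂) := by
  refine ⟨D₂.map diagProj, D₁.map diagProj, ?_, ?_, ?_, ?_⟩
  · simp only [Multiset.mem_map]
    rintro _ ⟨y, -, rfl⟩
    rfl
  · simp only [Multiset.mem_map]
    rintro _ ⟨x, -, rfl⟩
    rfl
  · simp [trivMatch_eq, Multiset.map_map]
  · simp [trivMatch_eq, Multiset.map_map, add_comm]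

lemma half_sub_le_costSup_of_orthogonal
    (horth : ∀ p₁ ∈ D₁, ∀ p₂ ∈ D₂, Ioo p₁.1 p₁.2 ∩ Ioo p₂.1 p₂.2 = ∅)
    (hM : IsMatching D₁ D₂ M) {x : ℝ × ℝ} (hx : x ∈ D₁) : (x.2 - x.1) / 2 ≤ costSup M := by
  obtain ⟨E₁, E₂, -, hE₂, hM₁, hM₂⟩ := hM
  obtain ⟨pr, hpr, rfl⟩ : ∃ pr ∈ M, pr.1 = x :=
    Multiset.mem_map.1 (hM₁ ▸ Multiset.mem_add.2 (Or.inl hx))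
  have hpartner : pr.2 ∈ D₂ + E₂ := hM₂ ▸ Multiset.mem_map_of_mem Prod.snd hpr
  have hdisj : Disjoint (Ioo pr.1.1 pr.1.2) (Ioo pr.2.1 pr.2.2) := by
    rcases Multiset.mem_add.1 hpartner with h | h
    · exact disjoint_iff_inter_eq_empty.2 (horth _ hx _ h)
    · rw [hE₂ _ h, Ioo_self]
      exact disjoint_empty _
  exact (half_sub_le_distSup_of_disjoint hdisj).trans (le_costSup hpr)

lemma costSup_trivMatch_le (hD₁ : IsDiagram D₁) (hD₂ : IsDiagram D₂)
    (horth : ∀ p₁ ∈ D₁, ∀ p₂ ∈ D₂, Ioo p₁.1 p₁.2 ∩ Ioo p₂.1 p₂.2 = ∅)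
    (hM : IsMatching D₁ D₂ M) : costSup (trivMatch D₁ D₂) ≤ costSup M := by
  have horth' : ∀ p₂ ∈ D₂, ∀ p₁ ∈ D₁, Ioo p₂.1 p₂.2 ∩ Ioo p₁.1 p₁.2 = ∅ :=
    fun p₂ h₂ p₁ h₁ => inter_comm (Ioo p₁.1 p₁.2) _ ▸ horth p₁ h₁ p₂ h₂
  refine costSup_le (costSup_nonneg M) ?_
  simp only [trivMatch_eq, Multiset.mem_add, Multiset.mem_map]
  rintro _ (⟨x, hx, rfl⟩ | ⟨y, hy, rfl⟩)
  · rw [distSup_diagProj (hD₁ x hx).le]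
    exact half_sub_le_costSup_of_orthogonal horth hM hx
  · rw [distSup_comm, distSup_diagProj (hD₂ y hy).le, ← costSup_map_swap M]
    exact half_sub_le_costSup_of_orthogonal horth' hM.map_swap hy

end IsMatching

theorem trivMatch_perfect_of_orthogonal
    (D₁ D₂ : Multiset (ℝ × ℝ)) (hD₁ : IsDiagram D₁) (hD₂ : IsDiagram D₂)
    (horth : ∀ p₁ ∈ D₁, ∀ p₂ ∈ D₂, Set.Ioo p₁.1 p₁.2 ∩ Set.Ioo p₂.1 p₂.2 = ∅) :
    IsMatching D₁ D₂ (trivMatch D₁ D₂) ∧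
      costSup (trivMatch D₁ D₂) = bottleneck D₁ D₂ := by
  have hmatch := trivMatch_isMatching D₁ D₂
  refine ⟨hmatch, (IsLeast.csInf_eq ?_).symm⟩
  refine ⟨⟨_, hmatch, rfl⟩, ?_⟩
  rintro _ ⟨M, hM, rfl⟩
  exact costSup_trivMatch_le hD₁ hD₂ horth hM
end
end

section
/- Two non-empty persistence diagrams D₁ and D₂ satisfy ς(D₁, D₂) = 1 if and only if D₁ = D₂, where ς is the landscape cosine similarity. -/
open MeasureTheory Filter

noncomputable section

/-- Tent function of a feature `(b, d)`. -/
def tent (b d t : ℝ) : ℝ := max 0 (min (t - b) (d - t))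

/-- The `j`-th layer (0-indexed) of the persistence landscape of the diagram `D`:
the `j`-th maximum of the tent functions of the features of `D`. -/
def landscape (D : Multiset (ℝ × ℝ)) (j : ℕ) (t : ℝ) : ℝ :=
  (((D.map fun p => tent p.1 p.2 t).sort (· ≤ ·)).reverse).getD j 0

/-- Inner product of two persistence landscapes. -/
def landInner (f g : ℕ → ℝ → ℝ) : ℝ := ∑' j : ℕ, ∫ t : ℝ, f j t * g j t

/-- 2-norm of a persistence landscape. -/
def landNorm (f : ℕ → ℝ → ℝ) : ℝ := Real.sqrt (landInner f f)

/-- Landscape cosine similarity of persistence diagrams. -/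
def cosSim (D₁ D₂ : Multiset (ℝ × ℝ)) : ℝ :=
  landInner (landscape D₁) (landscape D₂) /
    (landNorm (landscape D₁) * landNorm (landscape D₂))

/-!
Truncated after `N ≥ card D` layers, the landscape of `D` is a vector of the Hilbert space
`(L²(ℝ))^N` whose inner product is `landInner`, so `cosSim D₁ D₂ = 1` means, by the equality case
of Cauchy–Schwarz, that `landscape D₂ = r • landscape D₁` for some `r > 0`. Every layer is
1-Lipschitz, while the top layer has slope exactly 1 between the midpoint and the death of the
latest-dying feature; a rescaling keeps both properties only if `r = 1`.

The landscape is injective on diagrams: for `w > 0`, `w ≤ landscape D j t` iff more than `j`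
tents reach height `w` at `t`, so the landscape determines how many features lie in every
quadrant `{(b, d) | b ≤ s, u ≤ d}`, and these counts determine a finite multiset.
-/

theorem List.le_getD_iff_lt_countP {α : Type*} [LinearOrder α] {l : List α}
    (hl : l.Pairwise (· ≥ ·)) {d w : α} (hdw : d < w) (j : ℕ) :
    w ≤ l.getD j d ↔ j < l.countP (w ≤ ·) := by
  induction l generalizing j with
  | nil => simpa using hdw
  | cons a l ih =>
    obtain ⟨ha, hl⟩ := List.pairwise_cons.1 hl
    by_cases hwa : w ≤ a
    · cases j with
      | zero => simp [hwa]
      | succ j => rw [List.getD_cons_succ, ih hl, List.countP_cons]; simp [hwa]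
    · have hl0 : l.countP (w ≤ ·) = 0 :=
        List.countP_eq_zero.2 fun b hb => by simpa using (ha b hb).trans_lt (not_le.1 hwa)
      cases j with
      | zero => simp [hwa, hl0]
      | succ j => rw [List.getD_cons_succ, ih hl, List.countP_cons, hl0]; simp [hwa]

theorem Multiset.le_getD_reverse_sort_iff {α : Type*} [LinearOrder α] (s : Multiset α)
    {d w : α} (hdw : d < w) (j : ℕ) :
    w ≤ ((s.sort (· ≤ ·)).reverse).getD j d ↔ j < s.countP (w ≤ ·) := by
  rw [List.le_getD_iff_lt_countP (List.pairwise_reverse.2 (s.pairwise_sort _)) hdw,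
    List.countP_reverse, ← Multiset.coe_countP, Multiset.sort_eq]

theorem le_landscape_iff (D : Multiset (ℝ × ℝ)) {w : ℝ} (hw : 0 < w) (j : ℕ) (t : ℝ) :
    w ≤ landscape D j t ↔ j < D.countP (fun p => w ≤ tent p.1 p.2 t) := by
  rw [landscape, Multiset.le_getD_reverse_sort_iff _ hw, Multiset.countP_map,
    Multiset.countP_eq_card_filter]

theorem tent_nonneg (b d t : ℝ) : 0 ≤ tent b d t := le_max_left _ _

theorem tent_le_add_dist (b d s t : ℝ) : tent b d s ≤ tent b d t + dist s t := by
  have h₁ : s - t ≤ |s - t| := le_abs_self _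
  have h₂ : -(s - t) ≤ |s - t| := neg_le_abs _
  rw [Real.dist_eq, tent, tent]
  refine max_le (by positivity) ?_
  calc min (s - b) (d - s) ≤ min (t - b) (d - t) + |s - t| := by
        rw [← min_add_add_right]; exact min_le_min (by linarith) (by linarith)
    _ ≤ max 0 (min (t - b) (d - t)) + |s - t| := by gcongr; exact le_max_right _ _

theorem tent_eq_zero_of_notMem_Ioo {b d t : ℝ} (ht : t ∉ Set.Ioo b d) : tent b d t = 0 := by
  rw [Set.mem_Ioo, not_and_or, not_lt, not_lt] at ht
  refine max_eq_left ?_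
  rcases ht with ht | ht
  · exact (min_le_left _ _).trans (by linarith)
  · exact (min_le_right _ _).trans (by linarith)

theorem landscape_nonneg (D : Multiset (ℝ × ℝ)) (j : ℕ) (t : ℝ) : 0 ≤ landscape D j t := by
  rw [landscape, List.getD_eq_getElem?_getD]
  cases h : ((D.map fun p => tent p.1 p.2 t).sort (· ≤ ·)).reverse[j]? with
  | none => exact le_rfl
  | some x =>
    have hx := List.mem_of_getElem? h
    rw [List.mem_reverse, Multiset.mem_sort, Multiset.mem_map] at hx
    obtain ⟨p, -, rfl⟩ := hx
    exact tent_nonneg _ _ _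

theorem landscape_eq_zero {D : Multiset (ℝ × ℝ)} {j : ℕ} {t : ℝ}
    (h : ∀ w > 0, D.countP (fun p => w ≤ tent p.1 p.2 t) ≤ j) : landscape D j t = 0 := by
  refine (landscape_nonneg D j t).antisymm' (not_lt.1 fun hpos => ?_)
  exact (h _ hpos).not_gt ((le_landscape_iff D hpos j t).1 le_rfl)

theorem landscape_eq_zero_of_card_le {D : Multiset (ℝ × ℝ)} {j : ℕ} (hj : Multiset.card D ≤ j)
    (t : ℝ) : landscape D j t = 0 :=
  landscape_eq_zero fun _ _ => (Multiset.countP_le_card _ _).trans hj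

theorem landscape_eq_zero_of_forall_tent_eq_zero {D : Multiset (ℝ × ℝ)} {t : ℝ}
    (h : ∀ p ∈ D, tent p.1 p.2 t = 0) (j : ℕ) : landscape D j t = 0 :=
  landscape_eq_zero fun _ hw => by
    rw [Multiset.countP_eq_zero.2 fun p hp hwp => hw.not_ge (h p hp ▸ hwp)]
    exact Nat.zero_le j

theorem tent_le_landscape_zero {D : Multiset (ℝ × ℝ)} {p : ℝ × ℝ} (hp : p ∈ D) (t : ℝ) :
    tent p.1 p.2 t ≤ landscape D 0 t := by
  rcases (tent_nonneg p.1 p.2 t).eq_or_lt with h | h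
  · exact h ▸ landscape_nonneg D 0 t
  · exact (le_landscape_iff D h 0 t).2 (Multiset.countP_pos.2 ⟨p, hp, le_rfl⟩)

theorem landscape_lipschitzWith (D : Multiset (ℝ × ℝ)) (j : ℕ) :
    LipschitzWith 1 (landscape D j) := by
  refine LipschitzWith.of_le_add fun s t => ?_
  set x := landscape D j s
  rcases le_or_gt x (dist s t) with hx | hx
  · linarith [landscape_nonneg D j t]
  have hx₀ : 0 < x := dist_nonneg.trans_lt hx
  have hcount : D.countP (fun p => x ≤ tent p.1 p.2 s)
      ≤ D.countP (fun p => x - dist s t ≤ tent p.1 p.2 t) := by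
    simp only [Multiset.countP_eq_card_filter]
    exact Multiset.card_le_card (D.monotone_filter_right fun p hp => by
      linarith [tent_le_add_dist p.1 p.2 s t])
  have := (le_landscape_iff D (sub_pos.2 hx) j t).2
    (((le_landscape_iff D hx₀ j s).1 le_rfl).trans_le hcount)
  linarith

theorem landscape_continuous (D : Multiset (ℝ × ℝ)) (j : ℕ) : Continuous (landscape D j) :=
  (landscape_lipschitzWith D j).continuous

theorem landscape_hasCompactSupport (D : Multiset (ℝ × ℝ)) (j : ℕ) :
    HasCompactSupport (landscape D j) := by
  refine HasCompactSupport.intro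
    (D.toFinset.isCompact_biUnion fun p _ => isCompact_Icc (a := p.1) (b := p.2))
    fun t ht => landscape_eq_zero_of_forall_tent_eq_zero (fun p hp => ?_) j
  simp only [Set.mem_iUnion, not_exists] at ht
  exact tent_eq_zero_of_notMem_Ioo fun h => ht p (Multiset.mem_toFinset.2 hp)
    (Set.Ioo_subset_Icc_self h)

theorem landscape_memLp (D : Multiset (ℝ × ℝ)) (j : ℕ) : MemLp (landscape D j) 2 :=
  (landscape_continuous D j).memLp_of_hasCompactSupport (landscape_hasCompactSupport D j)

theorem Multiset.eq_of_forall_countP_le_eq {α : Type*} [PartialOrder α] [DecidableLE α]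
    {s t : Multiset α} (h : ∀ x ∈ s + t, s.countP (x ≤ ·) = t.countP (x ≤ ·)) : s = t := by
  classical
  induction hn : Multiset.card (s + t) using Nat.strong_induction_on generalizing s t with
  | _ n ih =>
    rcases eq_or_ne (s + t) 0 with h0 | hne
    · rw [(add_eq_zero.1 h0).1, (add_eq_zero.1 h0).2]
    -- At a maximal `x` of `s + t` the counts of `x ≤ ·` are multiplicities of `x`, so `x` can be
    -- cancelled from both sides.
    obtain ⟨x, hx⟩ := (s + t).toFinset.exists_maximal (Multiset.toFinset_nonempty.2 hne)
    have hx_mem : x ∈ s + t := Multiset.mem_toFinset.1 hx.prop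
    have hcount : ∀ m ≤ s + t, m.countP (x ≤ ·) = m.count x := fun m hm => by
      refine Multiset.countP_congr rfl fun y hy => propext ⟨fun hxy => ?_, fun hxy => hxy.le⟩
      exact (hx.eq_of_ge (Multiset.mem_toFinset.2 (Multiset.mem_of_le hm hy)) hxy).symm
    have hst : s.count x = t.count x := by
      rw [← hcount s (Multiset.le_add_right s t), ← hcount t (Multiset.le_add_left t s),
        h x hx_mem]
    have hx_st : x ∈ s ∧ x ∈ t := by
      rcases Multiset.mem_add.1 hx_mem with hxs | hxt
      · exact ⟨hxs, Multiset.count_pos.1 (hst ▸ Multiset.count_pos.2 hxs)⟩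
      · exact ⟨Multiset.count_pos.1 (hst.symm ▸ Multiset.count_pos.2 hxt), hxt⟩
    obtain ⟨s', rfl⟩ := Multiset.exists_cons_of_mem hx_st.1
    obtain ⟨t', rfl⟩ := Multiset.exists_cons_of_mem hx_st.2
    refine congrArg _ (ih _ ?_ (fun y hy => ?_) rfl)
    · rw [← hn]; simp
    · have := h y (by simp only [Multiset.mem_add, Multiset.mem_cons] at hy ⊢; tauto)
      rwa [Multiset.countP_cons, Multiset.countP_cons, add_left_inj] at this

theorem IsDiagram.eq_of_countP_quadrant_eq {D₁ D₂ : Multiset (ℝ × ℝ)} (hD₁ : IsDiagram D₁)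
    (hD₂ : IsDiagram D₂) (h : ∀ s u, s < u →
      D₁.countP (fun p => p.1 ≤ s ∧ u ≤ p.2) = D₂.countP (fun p => p.1 ≤ s ∧ u ≤ p.2)) :
    D₁ = D₂ := by
  -- Quadrant counts are the counts of principal upper sets for inclusion of intervals `[b, d]`,
  -- which is the product order of `ℝᵒᵈ × ℝ`.
  let e : ℝ × ℝ → ℝᵒᵈ × ℝ := fun p => (OrderDual.toDual p.1, p.2)
  have he : Function.Injective e := fun p q hpq => Prod.ext (congrArg Prod.fst hpq)
    (congrArg Prod.snd hpq)
  refine Multiset.map_injective he (Multiset.eq_of_forall_countP_le_eq fun x hx => ?_)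
  rw [← Multiset.map_add, Multiset.mem_map] at hx
  obtain ⟨p, hp, rfl⟩ := hx
  have hp' : p.1 < p.2 := (Multiset.mem_add.1 hp).elim (hD₁ p) (hD₂ p)
  simpa only [Multiset.countP_map, ← Multiset.countP_eq_card_filter, e, Prod.mk_le_mk,
    OrderDual.toDual_le_toDual] using h p.1 p.2 hp'

theorem half_sub_le_tent_midpoint_iff (b d : ℝ) {s u : ℝ} (hsu : s < u) :
    (u - s) / 2 ≤ tent b d ((s + u) / 2) ↔ b ≤ s ∧ u ≤ d := by
  simp only [tent, le_max_iff, le_min_iff]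
  constructor
  · rintro (h | ⟨h₁, h₂⟩)
    · linarith
    · constructor <;> linarith
  · rintro ⟨h₁, h₂⟩
    right; constructor <;> linarith

theorem IsDiagram.eq_of_landscape_eq {D₁ D₂ : Multiset (ℝ × ℝ)} (hD₁ : IsDiagram D₁)
    (hD₂ : IsDiagram D₂) (h : landscape D₁ = landscape D₂) : D₁ = D₂ := by
  refine hD₁.eq_of_countP_quadrant_eq hD₂ fun s u hsu => ?_
  have hw : 0 < (u - s) / 2 := by linarith
  simp only [← half_sub_le_tent_midpoint_iff _ _ hsu]
  exact eq_of_forall_lt_iff fun j => by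
    rw [← le_landscape_iff _ hw, ← le_landscape_iff _ hw, h]

theorem IsDiagram.exists_dist_le_dist_landscape_zero {D : Multiset (ℝ × ℝ)} (hD : IsDiagram D)
    (hne : D ≠ 0) : ∃ x y, x ≠ y ∧ dist x y ≤ dist (landscape D 0 x) (landscape D 0 y) := by
  obtain ⟨p, hp, hmax⟩ := Multiset.exists_max_image Prod.snd hne
  have hbd := hD p hp
  have hzero : landscape D 0 p.2 = 0 := landscape_eq_zero_of_forall_tent_eq_zero
    (fun q hq => tent_eq_zero_of_notMem_Ioo fun h => (hmax q hq).not_gt h.2) 0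
  refine ⟨(p.1 + p.2) / 2, p.2, by linarith, ?_⟩
  rw [hzero, Real.dist_eq, Real.dist_eq, sub_zero, abs_of_nonpos (by linarith),
    abs_of_nonneg (landscape_nonneg D 0 _)]
  calc -((p.1 + p.2) / 2 - p.2) = (p.2 - p.1) / 2 := by ring
    _ ≤ tent p.1 p.2 ((p.1 + p.2) / 2) := (half_sub_le_tent_midpoint_iff _ _ hbd).2 ⟨le_rfl, le_rfl⟩
    _ ≤ landscape D 0 ((p.1 + p.2) / 2) := tent_le_landscape_zero hp _

theorem LipschitzWith.one_le_norm_of_dist_le_dist_smul {𝕜 X E : Type*} [NormedField 𝕜]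
    [MetricSpace X] [SeminormedAddCommGroup E] [NormedSpace 𝕜 E] {f : X → E}
    (hf : LipschitzWith 1 f) {c : 𝕜} {x y : X} (hxy : x ≠ y)
    (h : dist x y ≤ dist (c • f x) (c • f y)) : 1 ≤ ‖c‖ := by
  have hpos : 0 < dist x y := dist_pos.2 hxy
  have hle : dist (f x) (f y) ≤ dist x y := by simpa using hf.dist_le_mul x y
  rw [dist_smul₀] at h
  nlinarith [norm_nonneg c]

theorem IsDiagram.eq_one_of_landscape_zero_eq_smul {D₁ D₂ : Multiset (ℝ × ℝ)}
    (hD₁ : IsDiagram D₁) (hne₁ : D₁ ≠ 0) (hD₂ : IsDiagram D₂) (hne₂ : D₂ ≠ 0) {r : ℝ}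
    (hr : 0 < r) (h : landscape D₂ 0 = r • landscape D₁ 0) : r = 1 := by
  have h' : landscape D₁ 0 = r⁻¹ • landscape D₂ 0 := by rw [h, inv_smul_smul₀ hr.ne']
  obtain ⟨x, y, hxy, hd⟩ := hD₂.exists_dist_le_dist_landscape_zero hne₂
  obtain ⟨x', y', hxy', hd'⟩ := hD₁.exists_dist_le_dist_landscape_zero hne₁
  rw [h, Pi.smul_apply, Pi.smul_apply] at hd
  rw [h', Pi.smul_apply, Pi.smul_apply] at hd'
  have h₁ := (landscape_lipschitzWith D₁ 0).one_le_norm_of_dist_le_dist_smul hxy hd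
  have h₂ := (landscape_lipschitzWith D₂ 0).one_le_norm_of_dist_le_dist_smul hxy' hd'
  rw [Real.norm_of_nonneg hr.le] at h₁
  rw [norm_inv, Real.norm_of_nonneg hr.le, one_le_inv₀ hr] at h₂
  exact le_antisymm h₂ h₁

open scoped InnerProductSpace

theorem MeasureTheory.MemLp.inner_toLp_toLp {α : Type*} [MeasurableSpace α] {μ : Measure α}
    {f g : α → ℝ} (hf : MemLp f 2 μ) (hg : MemLp g 2 μ) :
    ⟪hf.toLp f, hg.toLp g⟫_ℝ = ∫ a, f a * g a ∂μ := by
  rw [L2.inner_def]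
  refine integral_congr_ae ?_
  filter_upwards [hf.coeFn_toLp, hg.coeFn_toLp] with a hfa hgb
  rw [hfa, hgb, real_inner_eq_re_inner, RCLike.inner_apply, conj_trivial, mul_comm]
  rfl

theorem MeasureTheory.MemLp.eq_of_toLp_eq {X E : Type*} [TopologicalSpace X] [MeasurableSpace X]
    [OpensMeasurableSpace X] {μ : Measure X} [μ.IsOpenPosMeasure] [NormedAddCommGroup E]
    {p : ENNReal} {f g : X → E} (hf : MemLp f p μ) (hg : MemLp g p μ) (hfc : Continuous f)
    (hgc : Continuous g) (h : hf.toLp f = hg.toLp g) : f = g :=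
  (hfc.ae_eq_iff_eq μ hgc).1 ((MemLp.toLp_eq_toLp_iff hf hg).1 h)

def landscapeLp (D : Multiset (ℝ × ℝ)) (N : ℕ) : PiLp 2 (fun _ : Fin N => ℝ →₂[volume] ℝ) :=
  WithLp.toLp 2 fun j => (landscape_memLp D j).toLp

theorem landInner_eq_inner {D₁ D₂ : Multiset (ℝ × ℝ)} {N : ℕ} (h₁ : Multiset.card D₁ ≤ N) :
    landInner (landscape D₁) (landscape D₂) = ⟪landscapeLp D₁ N, landscapeLp D₂ N⟫_ℝ := by
  have hvanish : ∀ j ∉ Finset.range N, ∫ t, landscape D₁ j t * landscape D₂ j t = 0 :=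
    fun j hj => by
      simp [landscape_eq_zero_of_card_le (h₁.trans (not_lt.1 (Finset.mem_range.not.1 hj)))]
  rw [landInner, tsum_eq_sum hvanish, ← Fin.sum_univ_eq_sum_range, PiLp.inner_apply]
  exact Finset.sum_congr rfl fun j _ =>
    ((landscape_memLp D₁ j).inner_toLp_toLp (landscape_memLp D₂ j)).symm

theorem landNorm_eq_norm {D : Multiset (ℝ × ℝ)} {N : ℕ} (h : Multiset.card D ≤ N) :
    landNorm (landscape D) = ‖landscapeLp D N‖ := by
  rw [landNorm, landInner_eq_inner h, real_inner_self_eq_norm_mul_norm,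
    Real.sqrt_mul_self (norm_nonneg _)]

theorem landscape_eq_smul_of_landscapeLp_eq_smul {D₁ D₂ : Multiset (ℝ × ℝ)} {N : ℕ}
    (h₁ : Multiset.card D₁ ≤ N) (h₂ : Multiset.card D₂ ≤ N) {r : ℝ}
    (h : landscapeLp D₂ N = r • landscapeLp D₁ N) : landscape D₂ = r • landscape D₁ := by
  funext j
  rcases lt_or_ge j N with hj | hj
  · have hcoord := congrArg (fun X => X.ofLp ⟨j, hj⟩) h
    rw [PiLp.smul_apply] at hcoord
    exact (landscape_memLp D₂ j).eq_of_toLp_eq ((landscape_memLp D₁ j).const_smul r)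
      (landscape_continuous D₂ j) ((landscape_continuous D₁ j).const_smul r)
      (hcoord.trans ((landscape_memLp D₁ j).toLp_const_smul r).symm)
  · funext t
    simp [landscape_eq_zero_of_card_le (h₁.trans hj), landscape_eq_zero_of_card_le (h₂.trans hj)]

theorem IsDiagram.landscapeLp_ne_zero {D : Multiset (ℝ × ℝ)} (hD : IsDiagram D) (hne : D ≠ 0)
    {N : ℕ} (hN : Multiset.card D ≤ N) : landscapeLp D N ≠ 0 := by
  intro h0
  have hzero := landscape_eq_smul_of_landscapeLp_eq_smul hN hN (r := 0) (by rw [h0, zero_smul])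
  obtain ⟨x, y, hxy, hd⟩ := hD.exists_dist_le_dist_landscape_zero hne
  rw [hzero, zero_smul] at hd
  exact hxy (dist_le_zero.1 (by simpa using hd))

theorem cosSim_eq_one_iff
    (D₁ D₂ : Multiset (ℝ × ℝ)) (hD₁ : IsDiagram D₁) (hD₂ : IsDiagram D₂)
    (hne₁ : D₁ ≠ 0) (hne₂ : D₂ ≠ 0) :
    cosSim D₁ D₂ = 1 ↔ D₁ = D₂ := by
  set N := max (Multiset.card D₁) (Multiset.card D₂)
  have h₁ : Multiset.card D₁ ≤ N := le_max_left _ _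
  have h₂ : Multiset.card D₂ ≤ N := le_max_right _ _
  rw [cosSim, landInner_eq_inner h₁, landNorm_eq_norm h₁, landNorm_eq_norm h₂,
    real_inner_div_norm_mul_norm_eq_one_iff]
  constructor
  · rintro ⟨-, r, hr, hX⟩
    have hscale := landscape_eq_smul_of_landscapeLp_eq_smul h₁ h₂ hX
    obtain rfl : r = 1 := hD₁.eq_one_of_landscape_zero_eq_smul hne₁ hD₂ hne₂ hr (congrFun hscale 0)
    exact hD₁.eq_of_landscape_eq hD₂ (by rw [hscale, one_smul])
  · rintro rfl
    exact ⟨hD₁.landscapeLp_ne_zero hne₁ h₁, 1, one_pos, (one_smul _ _).symm⟩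
end
end
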